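/- Let R be a real closed field, σ ⊂ R^n an n-dimensional simplex, τ a face of σ of dimension d, and L the affine subspace generated by τ. Let ε > 0 be small enough that Ū_{τ,ε} ∖ ∂τ only meets the faces of σ containing τ. Then for each p ∈ σ ∖ τ, one has σ ∩ [L,p] ∩ Ū_{τ,ε} = [L,p]⁺ ∩ Ū_{τ,ε}, where [L,p] is the affine subspace generated by L and p and [L,p]⁺ is its closed half-space determined by L that contains p. -/

import Mathlib

open Topology Filter Set

/-- A real closed field: nonnegative elements are squares and every polynomial of odd
degree has a root. -/
def IsRealClosedField (K : Type*) [Field K] [LinearOrder K] [IsStrictOrderedRing K] : Prop :=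
  (∀ x : K, 0 ≤ x → ∃ y, y * y = x) ∧
    ∀ p : Polynomial K, Odd p.natDegree → ∃ x, Polynomial.IsRoot p x

section Semialgebraic

variable {R F : Type*} [Field R] [LinearOrder R] [IsStrictOrderedRing R] [Field F] [LinearOrder F] [IsStrictOrderedRing F]

/-- Realization in `F^n` (through the coefficient map `ι`) of a presentation:
a finite union of finite intersections of sets `{p > 0}` (flag `true`) and
`{p = 0}` (flag `false`), where the `p` are polynomials with coefficients in `R`. -/
def SAset {n : ℕ} (ι : R →+* F) (P : List (List (MvPolynomial (Fin n) R × Bool))) :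
    Set (Fin n → F) :=
  {x | ∃ c ∈ P, ∀ q ∈ c,
      (q.2 = true → 0 < MvPolynomial.eval x (MvPolynomial.map ι q.1)) ∧
      (q.2 = false → MvPolynomial.eval x (MvPolynomial.map ι q.1) = 0)}

/-- A set `M ⊆ R^n` is semialgebraic if it admits a presentation. -/
def IsSemialgebraic {n : ℕ} (M : Set (Fin n → R)) : Prop :=
  ∃ P, M = SAset (RingHom.id R) P

/-- `N ⊆ F^n` is the extension of `M ⊆ R^n` to `F`: some presentation defines both. -/
def ExtendsTo {n : ℕ} (ι : R →+* F) (M : Set (Fin n → R)) (N : Set (Fin n → F)) : Prop :=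
  ∃ P, M = SAset (RingHom.id R) P ∧ N = SAset ι P

/-- The graph over `M` of a function `f`, as a subset of `R^(n+1)`. -/
def graphOn {n : ℕ} (M : Set (Fin n → R)) (f : (Fin n → R) → R) :
    Set (Fin (n + 1) → R) :=
  {z | (fun i : Fin n => z i.castSucc) ∈ M ∧
    z (Fin.last n) = f (fun i : Fin n => z i.castSucc)}

/-- `g` is the extension to `MF` of the semialgebraic function `f` on `M`:
the graph of `g` over `MF` is the extension of the graph of `f` over `M`. -/
def FnExtendsTo {n : ℕ} (ι : R →+* F) (M : Set (Fin n → R)) (MF : Set (Fin n → F))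
    (f : (Fin n → R) → R) (g : (Fin n → F) → F) : Prop :=
  ExtendsTo ι (graphOn M f) (graphOn MF g)

end Semialgebraic

section Topological

variable {R F : Type*} [Field R] [LinearOrder R] [IsStrictOrderedRing R] [Field F] [LinearOrder F] [IsStrictOrderedRing F]
  [TopologicalSpace R] [TopologicalSpace F]

/-- `p ∈ F^n` is adjacent to `M`: it lies in the extension of every locally closed
semialgebraic set containing `M`. -/
def AdjacentTo {n : ℕ} (ι : R →+* F) (M : Set (Fin n → R)) (p : Fin n → F) : Prop :=
  ∀ N : Set (Fin n → R), IsSemialgebraic N → M ⊆ N → IsLocallyClosed N →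
    ∀ NF : Set (Fin n → F), ExtendsTo ι N NF → p ∈ NF

/-- Dimension of a set `S ⊆ R^n`: the largest `d` such that the projection of `S`
to some `d` coordinates has nonempty interior. -/
noncomputable def saDim {n : ℕ} (S : Set (Fin n → R)) : ℕ :=
  sSup {d : ℕ | ∃ g : Fin d → Fin n, Function.Injective g ∧
    (interior ((fun x : Fin n → R => x ∘ g) '' S)).Nonempty}

/-- Local dimension of `S` at `q`: minimum of `saDim (S ∩ U)` over open `U ∋ q`. -/
noncomputable def localDim {n : ℕ} (S : Set (Fin n → R)) (q : Fin n → R) : ℕ :=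
  sInf {d : ℕ | ∃ U : Set (Fin n → R), IsOpen U ∧ q ∈ U ∧ saDim (S ∩ U) = d}

/-- Semialgebraic connectedness. -/
def SAConnected {n : ℕ} (S : Set (Fin n → R)) : Prop :=
  ∀ A B : Set (Fin n → R), IsSemialgebraic A → IsSemialgebraic B → IsOpen A → IsOpen B →
    S ⊆ A ∪ B → S ∩ A ∩ B = ∅ → S ⊆ A ∨ S ⊆ B

/-- The germ of `M` at `q` is semialgebraically connected: arbitrarily small
semialgebraic neighborhoods of `q` meet `M` in a semialgebraically connected set. -/
def GermSAConnected {n : ℕ} (M : Set (Fin n → R)) (q : Fin n → R) : Prop :=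
  ∀ U : Set (Fin n → R), IsOpen U → q ∈ U →
    ∃ V : Set (Fin n → R), IsSemialgebraic V ∧ V ⊆ U ∧ q ∈ interior V ∧
      SAConnected (M ∩ V)

/-- Boundedness in `R^n`. -/
def BoundedSet {n : ℕ} (M : Set (Fin n → R)) : Prop :=
  ∃ r : R, ∀ x ∈ M, ∀ i, |x i| ≤ r

/-- `M` is appropriately embedded: bounded, and at each point `q ∈ Cl(M) ∖ M` the germ
`M_q` is semialgebraically connected and either `Cl(M)_q = M_q` or
`dim(Cl(M)_q ∖ M_q) = dim M_q - 1`. -/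
def AppropriatelyEmbedded {n : ℕ} (M : Set (Fin n → R)) : Prop :=
  BoundedSet M ∧ ∀ q ∈ closure M \ M, GermSAConnected M q ∧
    ((∃ U : Set (Fin n → R), IsOpen U ∧ q ∈ U ∧ closure M ∩ U = M ∩ U) ∨
      localDim (closure M \ M) q + 1 = localDim M q)

/-- The obstruction set `η(M)`. -/
def etaSet {n : ℕ} (M : Set (Fin n → R)) : Set (Fin n → R) :=
  {q | q ∈ closure M \ M ∧
    (localDim (closure M \ M) q + 1 < localDim M q ∨ ¬ GermSAConnected M q)}

/-- Semialgebraic depth of `p ∈ F^n` relative to `X ⊆ R^n`: minimal dimension of a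
closed semialgebraic subset `N` of `X` with `p ∈ N_F`. -/
noncomputable def saDepth {n : ℕ} (ι : R →+* F) (X : Set (Fin n → R))
    (p : Fin n → F) : ℕ :=
  sInf {d : ℕ | ∃ (N : Set (Fin n → R)) (NF : Set (Fin n → F)),
    IsSemialgebraic N ∧ N ⊆ X ∧ (∃ C, IsClosed C ∧ N = C ∩ X) ∧
    ExtendsTo ι N NF ∧ p ∈ NF ∧ saDim N = d}

/-- `f` is a continuous semialgebraic function on `M`. -/
def IsSAFunOn {n : ℕ} (M : Set (Fin n → R)) (f : (Fin n → R) → R) : Prop :=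
  ContinuousOn f M ∧ IsSemialgebraic (graphOn M f)

/-- The carrier of the ring `S(M,R)` (`star = false`), resp. `S*(M,R)` (`star = true`);
functions are identified along `M` by the homomorphism predicates below. -/
def SAFunD {n : ℕ} (M : Set (Fin n → R)) (star : Bool) :=
  {f : (Fin n → R) → R // IsSAFunOn M f ∧ (star = true → ∃ r : R, ∀ x ∈ M, |f x| ≤ r)}

/-- `φ` is an `R`-algebra homomorphism `S⋄(M,R) → F` (with `R → F` given by `ι`). -/
def IsSAAlgHomOn {n : ℕ} (ι : R →+* F) (M : Set (Fin n → R)) (star : Bool)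
    (φ : SAFunD M star → F) : Prop :=
  (∀ f g : SAFunD M star, (∀ x ∈ M, f.1 x = g.1 x) → φ f = φ g) ∧
  (∀ f g h : SAFunD M star, (∀ x ∈ M, h.1 x = f.1 x + g.1 x) → φ h = φ f + φ g) ∧
  (∀ f g h : SAFunD M star, (∀ x ∈ M, h.1 x = f.1 x * g.1 x) → φ h = φ f * φ g) ∧
  (∀ (r : R) (c : SAFunD M star), (∀ x ∈ M, c.1 x = r) → φ c = ι r)

/-- The core of `φ` is `p`: `φ` maps the `i`-th coordinate projection to `p i`. -/
def CoreEq {n : ℕ} (ι : R →+* F) (M : Set (Fin n → R)) (star : Bool)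
    (φ : SAFunD M star → F) (p : Fin n → F) : Prop :=
  ∀ i : Fin n, ∃ f : SAFunD M star, (∀ x ∈ M, f.1 x = x i) ∧ φ f = p i

/-- The graph over `N ⊆ R^n` of a map into `R^m`, inside `R^(n+m)`. -/
def graphMapOn {n m : ℕ} (N : Set (Fin n → R)) (h : (Fin n → R) → (Fin m → R)) :
    Set (Fin (n + m) → R) :=
  {z | (fun i : Fin n => z (Fin.castAdd m i)) ∈ N ∧
    (fun i : Fin m => z (Fin.natAdd n i)) = h (fun i : Fin n => z (Fin.castAdd m i))}

/-- `h` is a continuous semialgebraic map on `N`. -/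
def IsSAMapOn {n m : ℕ} (N : Set (Fin n → R)) (h : (Fin n → R) → (Fin m → R)) : Prop :=
  ContinuousOn h N ∧ IsSemialgebraic (graphMapOn N h)

/-- `P` is a prime ideal of `S⋄(M,R)`, phrased via pointwise identities on `M`. -/
def IsPrimeIdealOn {n : ℕ} (M : Set (Fin n → R)) (star : Bool)
    (P : Set (SAFunD M star)) : Prop :=
  (∀ f g : SAFunD M star, (∀ x ∈ M, f.1 x = g.1 x) → (f ∈ P ↔ g ∈ P)) ∧
  (∀ f : SAFunD M star, (∀ x ∈ M, f.1 x = 0) → f ∈ P) ∧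
  (∀ f g h : SAFunD M star, (∀ x ∈ M, h.1 x = f.1 x + g.1 x) → f ∈ P → g ∈ P → h ∈ P) ∧
  (∀ f g h : SAFunD M star, (∀ x ∈ M, h.1 x = f.1 x * g.1 x) → f ∈ P → h ∈ P) ∧
  (∀ f : SAFunD M star, (∀ x ∈ M, f.1 x = 1) → f ∉ P) ∧
  (∀ f g h : SAFunD M star, (∀ x ∈ M, h.1 x = f.1 x * g.1 x) → h ∈ P → f ∈ P ∨ g ∈ P)

/-- `(X, j)` is a semialgebraic pseudo-compactification of `M`: `X` is closed, bounded
and semialgebraic, and `j` is a semialgebraic embedding of `M` into `X` with dense image. -/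
def IsSAPseudoCompactification {n m : ℕ} (M : Set (Fin n → R)) (X : Set (Fin m → R))
    (j : (Fin n → R) → (Fin m → R)) : Prop :=
  IsSemialgebraic X ∧ IsClosed X ∧ BoundedSet X ∧
  IsSAMapOn M j ∧ Set.InjOn j M ∧ (∀ x ∈ M, j x ∈ X) ∧
  (∃ j' : (Fin m → R) → (Fin n → R), ContinuousOn j' (j '' M) ∧ ∀ x ∈ M, j' (j x) = x) ∧
  X ⊆ closure (j '' M)

end Topological

section Simplices

variable {R : Type*} [Field R] [LinearOrder R] [IsStrictOrderedRing R]

/-- The nonnegative square root, when it exists (junk value `0` otherwise). -/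
noncomputable def rsqrt (x : R) : R :=
  open Classical in
  if h : ∃ y : R, 0 ≤ y ∧ y * y = x then h.choose else 0

/-- Sum of squares of the coordinates. -/
def sqnorm {ι : Type*} [Fintype ι] (x : ι → R) : R := ∑ i, x i * x i

/-- Euclidean distance. -/
noncomputable def rdist {ι : Type*} [Fintype ι] (x y : ι → R) : R := rsqrt (sqnorm (x - y))

/-- Distance from a point to a set: the greatest lower bound of distances, when it
exists (junk value `0` otherwise). -/
noncomputable def glbDist {α : Type*} (d : α → α → R) (x : α) (S : Set α) : R :=
  open Classical in
  if h : ∃ r : R, IsGLB (d x '' S) r then h.choose else 0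

/-- The closed set `Ū_{τ,ε} = {z : dist(z,τ) ≤ ε · dist(z,B)}` (with `B = ∂τ`). -/
def UbarSet {ι : Type*} [Fintype ι] (τ B : Set (ι → R)) (ε : R) : Set (ι → R) :=
  {z | glbDist rdist z τ ≤ ε * glbDist rdist z B}

/-- Euclidean distance on a product `R^ι × R^κ`. -/
noncomputable def prodDist {ι κ : Type*} [Fintype ι] [Fintype κ]
    (a b : (ι → R) × (κ → R)) : R :=
  rsqrt (sqnorm (a.1 - b.1) + sqnorm (a.2 - b.2))

/-- The simplex spanned by the vertices `v`. -/
def simplexHull (K : Type*) [Field K] [LinearOrder K] [IsStrictOrderedRing K] {k m : ℕ}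
    (v : Fin k → (Fin m → K)) : Set (Fin m → K) :=
  convexHull K (Set.range v)

/-- The facet of the simplex opposite to the vertex `v i`. -/
def facetOf (K : Type*) [Field K] [LinearOrder K] [IsStrictOrderedRing K] {k m : ℕ}
    (v : Fin k → (Fin m → K)) (i : Fin k) : Set (Fin m → K) :=
  convexHull K (v '' ({i} : Set (Fin k))ᶜ)

/-- The boundary of the simplex: the union of its facets. -/
def simplexBoundary (K : Type*) [Field K] [LinearOrder K] [IsStrictOrderedRing K] {k m : ℕ}
    (v : Fin k → (Fin m → K)) : Set (Fin m → K) :=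
  ⋃ i, facetOf K v i

/-- The face of the simplex spanned by the vertices in `s`. -/
def faceOf (K : Type*) [Field K] [LinearOrder K] [IsStrictOrderedRing K] {k m : ℕ}
    (v : Fin k → (Fin m → K)) (s : Set (Fin k)) : Set (Fin m → K) :=
  convexHull K (v '' s)

/-- The boundary of the face spanned by the vertices in `s`. -/
def faceBoundaryOf (K : Type*) [Field K] [LinearOrder K] [IsStrictOrderedRing K] {k m : ℕ}
    (v : Fin k → (Fin m → K)) (s : Set (Fin k)) : Set (Fin m → K) :=
  ⋃ i ∈ s, faceOf K v (s \ {i})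

/-- `p` is the incenter of the simplex with vertices `v`: it lies in the simplex and is
equidistant from all facets. -/
def IsIncenterOf (K : Type*) [Field K] [LinearOrder K] [IsStrictOrderedRing K] {k m : ℕ}
    (v : Fin (k + 1) → (Fin m → K)) (p : Fin m → K) : Prop :=
  p ∈ simplexHull K v ∧
    ∀ i, glbDist rdist p (facetOf K v i) = glbDist rdist p (facetOf K v 0)

/-- The closed half-space of the affine subspace generated by `L` and `p`, determined
by `L` and containing `p`. -/
def halfspacePlus (K : Type*) [Field K] [LinearOrder K] [IsStrictOrderedRing K] {E : Type*} [AddCommGroup E]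
    [Module K E] (L : Set E) (p : E) : Set E :=
  {z | ∃ l ∈ L, ∃ l' ∈ L, ∃ t : K, 0 ≤ t ∧ z = l + t • (p - l')}

/-- The open tube `U_{τ,ε}` around `τ × {0}` inside `R^d × R^m`. -/
def tubeOpen {K : Type*} [Field K] [LinearOrder K] [IsStrictOrderedRing K] {d : ℕ} (m : ℕ)
    (τ B : Set (Fin d → K)) (ε : K) : Set ((Fin d → K) × (Fin m → K)) :=
  {z | glbDist prodDist z ((fun x => (x, (0 : Fin m → K))) '' τ) <
    ε * glbDist prodDist z ((fun x => (x, (0 : Fin m → K))) '' B)}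

/-- The closed tube `Ū_{τ,ε}` around `τ × {0}` inside `R^d × R^m`. -/
def tubeClosed {K : Type*} [Field K] [LinearOrder K] [IsStrictOrderedRing K] {d : ℕ} (m : ℕ)
    (τ B : Set (Fin d → K)) (ε : K) : Set ((Fin d → K) × (Fin m → K)) :=
  {z | glbDist prodDist z ((fun x => (x, (0 : Fin m → K))) '' τ) ≤
    ε * glbDist prodDist z ((fun x => (x, (0 : Fin m → K))) '' B)}

/-- The cone in `R^d × R` with base `τ × {0}` and apex `vert`. -/
def coneHat (K : Type*) [Field K] [LinearOrder K] [IsStrictOrderedRing K] {d : ℕ} (τ : Set (Fin d → K))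
    (vert : (Fin d → K) × K) : Set ((Fin d → K) × K) :=
  convexHull K ((fun x => (x, (0 : K))) '' τ ∪ {vert})

end Simplices

/-!
In the barycentric coordinates `λ` of `σ`, the points of `[L,p]` are those with
`λ_j = t · λ_j(p)` for all `j ∉ τ`, and `[L,p]⁺` is the part with `t ≥ 0`. As `λ_j(p) > 0` for
some `j ∉ τ`, the inclusion `σ ∩ [L,p] ⊆ [L,p]⁺` is immediate. Conversely a point `z` of
`[L,p]⁺ ∩ Ū_{τ,ε}` has `λ_j(z) ≥ 0` for `j ∉ τ`. If some `λ_i(z) < 0`, walk from the point `a` of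
`τ` nearest to `z` towards `z` and stop at the first point `y` where a coordinate vanishes. The
tube inequality passes from `z` to `y`, so `y ∈ Ū_{τ,ε}` lies on a facet not containing `τ`, hence
on `∂τ` by the choice of `ε`; then `dist(z, ∂τ) ≤ |z - y| ≤ |z - a| ≤ ε · dist(z, ∂τ)`, which is
impossible for `ε < 1`.

As `R` need not be complete, `glbDist` falls back to `0` when no infimum exists, so the argument
needs that the faces of `σ` actually have nearest points. This goes by induction on the face:
project orthogonally onto its affine span; if the projection falls outside the face, sliding any
point of the face towards it until a coordinate vanishes gives a closer point of a smaller face.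
-/

open Matrix

section EuclideanDistance

theorem sqnorm_add {R ι : Type*} [Field R] [Fintype ι] (u v : ι → R) :
    sqnorm (u + v) = sqnorm u + 2 * (u ⬝ᵥ v) + sqnorm v := by
  change (u + v) ⬝ᵥ (u + v) = u ⬝ᵥ u + 2 * (u ⬝ᵥ v) + v ⬝ᵥ v
  simp only [add_dotProduct, dotProduct_add, dotProduct_comm v u]
  ring

theorem sqnorm_smul {R ι : Type*} [Field R] [Fintype ι] (c : R) (v : ι → R) :
    sqnorm (c • v) = c * c * sqnorm v := by
  change (c • v) ⬝ᵥ (c • v) = c * c * (v ⬝ᵥ v)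
  simp only [smul_dotProduct, dotProduct_smul, smul_eq_mul, mul_assoc]

theorem rsqrt_nonneg {R : Type*} [Field R] [LinearOrder R] (x : R) : 0 ≤ rsqrt x := by
  unfold rsqrt
  split_ifs with h
  exacts [h.choose_spec.1, le_rfl]

theorem rdist_nonneg {R ι : Type*} [Field R] [LinearOrder R] [Fintype ι] (x y : ι → R) :
    0 ≤ rdist x y :=
  rsqrt_nonneg _

variable {R : Type*} [Field R] [LinearOrder R] [IsStrictOrderedRing R]

theorem rsqrt_eq {x a : R} (ha : 0 ≤ a) (h : a * a = x) : rsqrt x = a := by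
  have hex : ∃ y : R, 0 ≤ y ∧ y * y = x := ⟨a, ha, h⟩
  rw [rsqrt, dif_pos hex]
  exact (mul_self_inj hex.choose_spec.1 ha).1 (hex.choose_spec.2.trans h.symm)

theorem rsqrt_mul_self (hsq : ∀ x : R, 0 ≤ x → IsSquare x) {x : R} (hx : 0 ≤ x) :
    rsqrt x * rsqrt x = x := by
  obtain ⟨y, rfl⟩ := hsq x hx
  rw [rsqrt_eq (abs_nonneg y) (abs_mul_abs_self y), abs_mul_abs_self]

theorem rsqrt_le_rsqrt (hsq : ∀ x : R, 0 ≤ x → IsSquare x) {x y : R} (hx : 0 ≤ x)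
    (hxy : x ≤ y) : rsqrt x ≤ rsqrt y := by
  rw [mul_self_le_mul_self_iff (rsqrt_nonneg x) (rsqrt_nonneg y),
    rsqrt_mul_self hsq hx, rsqrt_mul_self hsq (hx.trans hxy)]
  exact hxy

variable {ι : Type*} [Fintype ι]

theorem sqnorm_nonneg (v : ι → R) : 0 ≤ sqnorm v :=
  Finset.sum_nonneg fun i _ => mul_self_nonneg (v i)

theorem rdist_pos (hsq : ∀ x : R, 0 ≤ x → IsSquare x) {x y : ι → R} (h : x ≠ y) :
    0 < rdist x y := by
  refine (rdist_nonneg x y).lt_of_ne fun h0 => h ?_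
  have hsq0 := rsqrt_mul_self hsq (sqnorm_nonneg (x - y))
  rw [rdist] at h0
  rw [← h0, zero_mul] at hsq0
  exact sub_eq_zero.1 (dotProduct_self_eq_zero.1 hsq0.symm)

theorem rdist_le_rdist_of_sqnorm_le (hsq : ∀ x : R, 0 ≤ x → IsSquare x) {x y z : ι → R}
    (h : sqnorm (z - x) ≤ sqnorm (z - y)) : rdist z x ≤ rdist z y :=
  rsqrt_le_rsqrt hsq (sqnorm_nonneg _) h

theorem rsqrt_sqnorm_smul (hsq : ∀ x : R, 0 ≤ x → IsSquare x) {c : R} (hc : 0 ≤ c)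
    (v : ι → R) : rsqrt (sqnorm (c • v)) = c * rsqrt (sqnorm v) := by
  refine rsqrt_eq (mul_nonneg hc (rsqrt_nonneg _)) ?_
  rw [sqnorm_smul, mul_mul_mul_comm, rsqrt_mul_self hsq (sqnorm_nonneg v)]

theorem rdist_lineMap_left (hsq : ∀ x : R, 0 ≤ x → IsSquare x) {s : R} (hs : 0 ≤ s)
    (a z : ι → R) : rdist (AffineMap.lineMap a z s) a = s * rdist z a := by
  rw [rdist, AffineMap.lineMap_apply_module', add_sub_cancel_right, rsqrt_sqnorm_smul hsq hs,
    rdist]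

theorem rdist_right_lineMap (hsq : ∀ x : R, 0 ≤ x → IsSquare x) {s : R} (hs : s ≤ 1)
    (a z : ι → R) : rdist z (AffineMap.lineMap a z s) = (1 - s) * rdist z a := by
  have h : z - AffineMap.lineMap a z s = (1 - s) • (z - a) := by
    rw [AffineMap.lineMap_apply_module']
    module
  rw [rdist, h, rsqrt_sqnorm_smul hsq (sub_nonneg.2 hs), rdist]

theorem rdist_triangle (hsq : ∀ x : R, 0 ≤ x → IsSquare x) (x y z : ι → R) :
    rdist x z ≤ rdist x y + rdist y z := by
  have hxz : x - z = (x - y) + (y - z) := (sub_add_sub_cancel x y z).symm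
  rw [rdist, rdist, rdist, hxz]
  set u := x - y
  set v := y - z
  have hcs := Finset.sum_mul_sq_le_sq_mul_sq Finset.univ u v
  simp only [sq] at hcs
  change (u ⬝ᵥ v) * (u ⬝ᵥ v) ≤ sqnorm u * sqnorm v at hcs
  have hu := rsqrt_mul_self hsq (sqnorm_nonneg u)
  have hv := rsqrt_mul_self hsq (sqnorm_nonneg v)
  have hu0 := rsqrt_nonneg (sqnorm u)
  have hv0 := rsqrt_nonneg (sqnorm v)
  have huv : u ⬝ᵥ v ≤ rsqrt (sqnorm u) * rsqrt (sqnorm v) := by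
    nlinarith [mul_nonneg hu0 hv0]
  rw [mul_self_le_mul_self_iff (rsqrt_nonneg _) (add_nonneg hu0 hv0),
    rsqrt_mul_self hsq (sqnorm_nonneg _), sqnorm_add]
  nlinarith

end EuclideanDistance

section GlbDist

variable {R : Type*} [Field R] [LinearOrder R] {α : Type*} {d : α → α → R} {z : α} {S : Set α}

theorem glbDist_le_of_mem (hd : ∀ y, 0 ≤ d z y) {a : α} (ha : a ∈ S) : glbDist d z S ≤ d z a := by
  unfold glbDist
  split_ifs with h
  exacts [h.choose_spec.1 ⟨a, ha, rfl⟩, hd a]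

theorem glbDist_eq_of_forall_le {a : α} (ha : a ∈ S) (hmin : ∀ x ∈ S, d z a ≤ d z x) :
    glbDist d z S = d z a := by
  have hglb : IsGLB (d z '' S) (d z a) :=
    ⟨forall_mem_image.2 hmin, fun _ hc => hc ⟨a, ha, rfl⟩⟩
  have hex : ∃ r, IsGLB (d z '' S) r := ⟨_, hglb⟩
  rw [glbDist, dif_pos hex]
  exact hex.choose_spec.unique hglb

theorem isGLB_glbDist_of_pos (h : 0 < glbDist d z S) : IsGLB (d z '' S) (glbDist d z S) := by
  unfold glbDist at h ⊢
  split_ifs at h ⊢ with hex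
  exacts [hex.choose_spec, (lt_irrefl 0 h).elim]

end GlbDist

section Proximinal

variable {R : Type*} [Field R] [LinearOrder R] {ι : Type*} [Fintype ι]

def IsProximinal (S : Set (ι → R)) : Prop :=
  ∀ z, S.Nonempty → ∃ a ∈ S, ∀ x ∈ S, rdist z a ≤ rdist z x

theorem IsProximinal.biUnion {κ : Type*} {s : Set κ} (hs : s.Finite) {T : κ → Set (ι → R)}
    (hT : ∀ k ∈ s, IsProximinal (T k)) : IsProximinal (⋃ k ∈ s, T k) := by
  rintro z ⟨x0, hx0⟩
  have hnear : ∀ k ∈ {k ∈ s | (T k).Nonempty}, ∃ a ∈ T k, ∀ x ∈ T k, rdist z a ≤ rdist z x :=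
    fun k hk => hT k hk.1 z hk.2
  choose! g hgT hg using hnear
  obtain ⟨k0, hk0, hx0k⟩ := mem_iUnion₂.1 hx0
  obtain ⟨k1, hk1, hmin⟩ := exists_min_image {k ∈ s | (T k).Nonempty} (fun k => rdist z (g k))
    (hs.subset (sep_subset _ _)) ⟨k0, hk0, x0, hx0k⟩
  refine ⟨g k1, mem_biUnion hk1.1 (hgT k1 hk1), fun x hx => ?_⟩
  obtain ⟨k, hk, hxk⟩ := mem_iUnion₂.1 hx
  exact (hmin k ⟨hk, x, hxk⟩).trans (hg k ⟨hk, x, hxk⟩ x hxk)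

end Proximinal

section Projection

variable {R : Type*} [Field R] [LinearOrder R] [IsStrictOrderedRing R]

theorem AffineSubspace.exists_dotProduct_sub_eq_zero {ι : Type*} [Fintype ι]
    (P : AffineSubspace R (ι → R)) (hP : (P : Set (ι → R)).Nonempty) (z : ι → R) :
    ∃ π ∈ P, ∀ x ∈ P, (z - π) ⬝ᵥ (x - π) = 0 := by
  obtain ⟨q, hq⟩ := hP
  let B : LinearMap.BilinForm R (ι → R) := dotProductBilin R R
  have hrefl : B.IsRefl := fun x y h => by
    simpa only [B, dotProductBilin_apply_apply, dotProduct_comm] using h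
  have hcompl : IsCompl P.direction (B.orthogonal P.direction) := by
    refine (LinearMap.BilinForm.isCompl_orthogonal_iff_disjoint hrefl).2 ?_
    refine Submodule.disjoint_def.2 fun v hv hv' => ?_
    exact dotProduct_self_eq_zero.1 (LinearMap.BilinForm.mem_orthogonal_iff.1 hv' v hv)
  obtain ⟨v, hv, v', hv', hsum⟩ :=
    Submodule.mem_sup.1 (hcompl.sup_eq_top ▸ Submodule.mem_top : z - q ∈ _)
  have hπ : v + q ∈ P := AffineSubspace.vadd_mem_of_mem_direction hv hq
  refine ⟨v + q, hπ, fun x hx => ?_⟩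
  have hxπ : x - (v + q) ∈ P.direction := AffineSubspace.vsub_mem_direction hx hπ
  rw [show z - (v + q) = v' by rw [sub_add_eq_sub_sub_swap, ← hsum]; abel, dotProduct_comm]
  exact LinearMap.BilinForm.mem_orthogonal_iff.1 hv' _ hxπ

theorem exists_lineMap_nonneg_eq_zero {κ : Type*} [Finite κ] {lam mu : κ → R}
    (hlam : ∀ i, 0 ≤ lam i) (hmu : ∃ i, mu i < 0) :
    ∃ s : R, 0 ≤ s ∧ s < 1 ∧ (∀ i, 0 ≤ AffineMap.lineMap (lam i) (mu i) s) ∧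
      ∃ i, mu i < 0 ∧ AffineMap.lineMap (lam i) (mu i) s = 0 := by
  obtain ⟨i, hi, hmin⟩ := exists_min_image {i | mu i < 0} (fun i => lam i / (lam i - mu i))
    (toFinite _) hmu
  have hden : ∀ j, mu j < 0 → 0 < lam j - mu j := fun j hj => by linarith [hlam j]
  set s := lam i / (lam i - mu i)
  have hs0 : 0 ≤ s := div_nonneg (hlam i) (hden i hi).le
  have hs1 : s < 1 := (div_lt_one (hden i hi)).2 (by linarith [show mu i < 0 from hi])
  simp only [AffineMap.lineMap_apply_ring']
  refine ⟨s, hs0, hs1, fun j => ?_, i, hi, ?_⟩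
  · by_cases hj : mu j < 0
    · have := (le_div_iff₀ (hden j hj)).1 (hmin j hj)
      linarith
    · nlinarith [hlam j]
  · rw [div_mul_eq_mul_div, div_add' _ _ _ (hden i hi).ne', div_eq_zero_iff]
    left; ring

end Projection

section Barycentric

theorem AffineMap.apply_add_smul_sub {k E : Type*} [CommRing k] [AddCommGroup E] [Module k E]
    (f : E →ᵃ[k] k) (x u v : E) (t : k) : f (x + t • (u - v)) = f x + t * (f u - f v) := by
  have h : x + t • (u - v) = t • (u -ᵥ v) +ᵥ x := by rw [vsub_eq_sub, vadd_eq_add, add_comm]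
  rw [h, AffineMap.map_vadd, LinearMap.map_smul, AffineMap.linearMap_vsub]
  simp only [vsub_eq_sub, vadd_eq_add, smul_eq_mul]
  ring

theorem AffineBasis.coord_eq_zero_of_mem_affineSpan_image {κ k E : Type*} [Ring k]
    [AddCommGroup E] [Module k E] (b : AffineBasis κ k E) {s : Set κ} {x : E}
    (hx : x ∈ affineSpan k (b '' s)) {i : κ} (hi : i ∉ s) : b.coord i x = 0 := by
  have hmem : b.coord i x ∈ affineSpan k (b.coord i '' (b '' s)) := by
    rw [← AffineSubspace.map_span]
    exact ⟨x, hx, rfl⟩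
  have hzero : b.coord i '' (b '' s) ⊆ {0} := by
    rintro _ ⟨_, ⟨j, hj, rfl⟩, rfl⟩
    exact b.coord_apply_ne fun h => hi (h ▸ hj)
  simpa using affineSpan_mono k hzero hmem

variable {R : Type*} [Field R] [LinearOrder R] [IsStrictOrderedRing R]

theorem halfspacePlus_subset_affineSpan_union {E : Type*} [AddCommGroup E] [Module R E]
    (S : Set E) (p : E) : halfspacePlus R (affineSpan R S : Set E) p ⊆ affineSpan R (S ∪ {p}) := by
  rintro _ ⟨l, hl, l', hl', t, -, rfl⟩
  have hS : affineSpan R S ≤ affineSpan R (S ∪ {p}) := affineSpan_mono R subset_union_left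
  have h := AffineSubspace.smul_vsub_vadd_mem _ t
    (subset_affineSpan R _ (mem_union_right _ (mem_singleton p))) (hS hl') (hS hl)
  rwa [vsub_eq_sub, vadd_eq_add, add_comm] at h

variable {κ : Type*}

theorem AffineBasis.mem_convexHull_image_iff [Finite κ] {E : Type*} [AddCommGroup E]
    [Module R E] (b : AffineBasis κ R E) {s : Set κ} {x : E} :
    x ∈ convexHull R (b '' s) ↔ (∀ i, 0 ≤ b.coord i x) ∧ ∀ i ∉ s, b.coord i x = 0 := by
  classical
  have := Fintype.ofFinite κ
  refine ⟨fun hx => ⟨?_, fun i hi =>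
    b.coord_eq_zero_of_mem_affineSpan_image (convexHull_subset_affineSpan _ hx) hi⟩, ?_⟩
  · have hx' := convexHull_mono (image_subset_range b s) hx
    rwa [b.convexHull_eq_nonneg_coord] at hx'
  · rintro ⟨h0, hs⟩
    set t := Finset.univ.filter (· ∈ s)
    have hzero : ∀ i ∈ Finset.univ, i ∉ t → b.coord i x = 0 := fun i _ hi =>
      hs i (by simpa [t] using hi)
    have hsum : ∑ i ∈ t, b.coord i x = 1 := by
      rw [Finset.sum_subset (Finset.subset_univ t) hzero, b.sum_coord_apply_eq_one]
    have hcm : t.centerMass (b.coord · x) b = x := by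
      rw [Finset.centerMass_subset _ (Finset.subset_univ t) hzero,
        Finset.centerMass_eq_of_sum_1 _ _ (b.sum_coord_apply_eq_one x),
        b.linear_combination_coord_eq_self]
    rw [← hcm]
    exact t.centerMass_mem_convexHull (fun i _ => h0 i) (by rw [hsum]; exact one_pos)
      fun i hi => ⟨i, (Finset.mem_filter.1 hi).2, rfl⟩

theorem rdist_lineMap_le_of_dotProduct_eq_zero {ι : Type*} [Fintype ι]
    (hsq : ∀ x : R, 0 ≤ x → IsSquare x) {z π x : ι → R} (h : (z - π) ⬝ᵥ (x - π) = 0) {t : R}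
    (ht0 : 0 ≤ t) (ht1 : t ≤ 1) : rdist z (AffineMap.lineMap x π t) ≤ rdist z x := by
  refine rdist_le_rdist_of_sqnorm_le hsq ?_
  have horth : (z - π) ⬝ᵥ (π - x) = 0 := by
    rw [show π - x = -(x - π) by abel, dotProduct_neg, h, neg_zero]
  have hsplit : ∀ c : R, sqnorm ((z - π) + c • (π - x)) = sqnorm (z - π) + c * c * sqnorm (π - x) :=
    fun c => by rw [sqnorm_add, sqnorm_smul, dotProduct_smul, horth, smul_zero, mul_zero, add_zero]
  have e1 : z - AffineMap.lineMap x π t = (z - π) + (1 - t) • (π - x) := by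
    rw [AffineMap.lineMap_apply_module']
    module
  have e2 : z - x = (z - π) + (1 : R) • (π - x) := by module
  rw [e1, e2, hsplit, hsplit]
  nlinarith [mul_nonneg (mul_nonneg ht0 (by linarith : (0 : R) ≤ 2 - t)) (sqnorm_nonneg (π - x))]

theorem AffineBasis.isProximinal_convexHull_image {ι : Type*} [Fintype ι] [Finite κ]
    (hsq : ∀ x : R, 0 ≤ x → IsSquare x) (b : AffineBasis κ R (ι → R)) (s : Set κ) :
    IsProximinal (convexHull R (b '' s)) := by
  induction s using WellFoundedLT.induction with | ind s ih
  rintro z ⟨x0, hx0⟩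
  obtain ⟨π, hπ, horth⟩ := (affineSpan R (b '' s)).exists_dotProduct_sub_eq_zero
    ⟨x0, convexHull_subset_affineSpan _ hx0⟩ z
  have hπs : ∀ i ∉ s, b.coord i π = 0 := fun i hi =>
    b.coord_eq_zero_of_mem_affineSpan_image hπ hi
  have hcloser : ∀ x ∈ convexHull R (b '' s), ∀ t : R, 0 ≤ t → t ≤ 1 →
      rdist z (AffineMap.lineMap x π t) ≤ rdist z x := fun x hx t ht0 ht1 =>
    rdist_lineMap_le_of_dotProduct_eq_zero hsq
      (horth x (convexHull_subset_affineSpan _ hx)) ht0 ht1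
  by_cases hπ0 : ∀ i, 0 ≤ b.coord i π
  · refine ⟨π, b.mem_convexHull_image_iff.2 ⟨hπ0, hπs⟩, fun x hx => ?_⟩
    simpa using hcloser x hx 1 zero_le_one le_rfl
  push Not at hπ0
  set U := ⋃ u ∈ s, convexHull R (b '' (s \ {u}))
  have hU : IsProximinal U :=
    IsProximinal.biUnion s.toFinite fun u hu => ih _ (sdiff_singleton_ssubset.2 hu)
  have hexit : ∀ x ∈ convexHull R (b '' s), ∃ y ∈ U, rdist z y ≤ rdist z x := by
    intro x hx
    obtain ⟨hx0, hxs⟩ := b.mem_convexHull_image_iff.1 hx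
    obtain ⟨t, ht0, ht1, hnn, u, hu, hzero⟩ := exists_lineMap_nonneg_eq_zero hx0 hπ0
    have hus : u ∈ s := by_contra fun h => (hπs u h).not_lt hu
    have hcoord : ∀ i, b.coord i (AffineMap.lineMap x π t) =
        AffineMap.lineMap (b.coord i x) (b.coord i π) t := fun i => AffineMap.apply_lineMap _ _ _ _
    refine ⟨_, mem_biUnion hus (b.mem_convexHull_image_iff.2 ⟨fun i => ?_, fun i hi => ?_⟩),
      hcloser x hx t ht0 ht1.le⟩
    · rw [hcoord]; exact hnn i
    · rw [hcoord]
      by_cases hiu : i = u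
      · rw [hiu, hzero]
      · rw [hxs i fun h => hi ⟨h, hiu⟩, hπs i fun h => hi ⟨h, hiu⟩, AffineMap.lineMap_same_apply]
  obtain ⟨y0, hy0, -⟩ := hexit x0 hx0
  obtain ⟨a, ha, hmin⟩ := hU z ⟨y0, hy0⟩
  refine ⟨a, ?_, fun x hx => ?_⟩
  · obtain ⟨u, -, hau⟩ := mem_iUnion₂.1 ha
    exact convexHull_mono (image_mono sdiff_subset) hau
  · obtain ⟨y, hy, hyx⟩ := hexit x hx
    exact (hmin y hy).trans hyx

end Barycentric

section Simplex

variable {R : Type*} [Field R] [LinearOrder R] [IsStrictOrderedRing R] {n : ℕ}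
  {w : Fin (n + 1) → (Fin n → R)}

noncomputable def simplexBasis (w : Fin (n + 1) → (Fin n → R)) (hw : AffineIndependent R w) :
    AffineBasis (Fin (n + 1)) R (Fin n → R) :=
  ⟨w, hw, hw.affineSpan_eq_top_iff_card_eq_finrank_add_one.2 (by simp)⟩

theorem mem_simplexHull_iff (hw : AffineIndependent R w) {x : Fin n → R} :
    x ∈ simplexHull R w ↔ ∀ i, 0 ≤ (simplexBasis w hw).coord i x :=
  Set.ext_iff.1 (simplexBasis w hw).convexHull_eq_nonneg_coord x

theorem mem_faceOf_iff (hw : AffineIndependent R w) {s : Set (Fin (n + 1))} {x : Fin n → R} :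
    x ∈ faceOf R w s ↔
      (∀ i, 0 ≤ (simplexBasis w hw).coord i x) ∧ ∀ i ∉ s, (simplexBasis w hw).coord i x = 0 :=
  (simplexBasis w hw).mem_convexHull_image_iff

theorem isProximinal_faceOf (hsq : ∀ x : R, 0 ≤ x → IsSquare x) (hw : AffineIndependent R w)
    (s : Set (Fin (n + 1))) :
    IsProximinal (faceOf R w s) :=
  (simplexBasis w hw).isProximinal_convexHull_image hsq s

theorem isProximinal_faceBoundaryOf (hsq : ∀ x : R, 0 ≤ x → IsSquare x)
    (hw : AffineIndependent R w) (s : Set (Fin (n + 1))) : IsProximinal (faceBoundaryOf R w s) :=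
  IsProximinal.biUnion s.toFinite fun _ _ => isProximinal_faceOf hsq hw _

theorem not_faceOf_subset_faceOf_compl (hw : AffineIndependent R w) {s : Set (Fin (n + 1))}
    {u : Fin (n + 1)} (hu : u ∈ s) :
    ¬ faceOf R w s ⊆ faceOf R w {u}ᶜ := fun h => by
  have hwu := ((mem_faceOf_iff hw).1 (h (subset_convexHull R _ ⟨u, hu, rfl⟩))).2 u (by simp)
  exact one_ne_zero (((simplexBasis w hw).coord_apply_eq u).symm.trans hwu)

end Simplex

section Tube

variable {R : Type*} [Field R] [LinearOrder R] [IsStrictOrderedRing R]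

theorem lineMap_mem_UbarSet {ι : Type*} [Fintype ι] (hsq : ∀ x : R, 0 ≤ x → IsSquare x)
    {τ B : Set (ι → R)} (hB : IsProximinal B) {ε : R} (hε0 : 0 ≤ ε) (hε1 : ε ≤ 1)
    {z a : ι → R} (hz : z ∈ UbarSet τ B ε) (ha : a ∈ τ) (hza : glbDist rdist z τ = rdist z a)
    (hzB : 0 < glbDist rdist z B) {s : R} (hs0 : 0 ≤ s) (hs1 : s ≤ 1) :
    AffineMap.lineMap a z s ∈ UbarSet τ B ε := by
  set y := AffineMap.lineMap a z s
  obtain ⟨b, hb, hbmin⟩ := hB y (isGLB_glbDist_of_pos hzB).nonempty.of_image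
  have hzb : glbDist rdist z B ≤ rdist z b := (isGLB_glbDist_of_pos hzB).1 ⟨b, hb, rfl⟩
  have htri := rdist_triangle hsq z y b
  rw [rdist_right_lineMap hsq hs1] at htri
  have hd := rdist_nonneg z a
  have hzU : rdist z a ≤ ε * glbDist rdist z B := hza ▸ hz
  change glbDist rdist y τ ≤ ε * glbDist rdist y B
  rw [glbDist_eq_of_forall_le hb hbmin]
  calc glbDist rdist y τ ≤ rdist y a := glbDist_le_of_mem (rdist_nonneg y) ha
    _ = s * rdist z a := rdist_lineMap_left hsq hs0 a z
    _ ≤ ε * (glbDist rdist z B - (1 - s) * rdist z a) := by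
      nlinarith [mul_nonneg (sub_nonneg.2 hε1) (mul_nonneg (sub_nonneg.2 hs1) hd)]
    _ ≤ ε * rdist y b := mul_le_mul_of_nonneg_left (by linarith) hε0

variable {n : ℕ} {w : Fin (n + 1) → (Fin n → R)}

theorem mem_simplexHull_of_mem_UbarSet (hsq : ∀ x : R, 0 ≤ x → IsSquare x)
    (hw : AffineIndependent R w)
    {sτ : Set (Fin (n + 1))} (hsτ : sτ.Nonempty) {ε : R} (hε0 : 0 < ε) (hε1 : ε < 1)
    (hε : ∀ s : Set (Fin (n + 1)), ¬ faceOf R w sτ ⊆ faceOf R w s →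
      (UbarSet (faceOf R w sτ) (faceBoundaryOf R w sτ) ε \ faceBoundaryOf R w sτ) ∩
        faceOf R w s = ∅)
    {z : Fin n → R} (hz : z ∈ UbarSet (faceOf R w sτ) (faceBoundaryOf R w sτ) ε)
    (hout : ∀ j ∉ sτ, 0 ≤ (simplexBasis w hw).coord j z) : z ∈ simplexHull R w := by
  set b := simplexBasis w hw
  rw [mem_simplexHull_iff hw]
  by_contra! hneg
  obtain ⟨i0, hi0⟩ := hsτ
  obtain ⟨a, haτ, hamin⟩ :=
    isProximinal_faceOf hsq hw sτ z ⟨w i0, subset_convexHull R _ ⟨i0, hi0, rfl⟩⟩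
  have hza := glbDist_eq_of_forall_le haτ hamin
  have ha0 := ((mem_faceOf_iff hw).1 haτ).1
  have hd : 0 < rdist z a := rdist_pos hsq <| by
    rintro rfl
    obtain ⟨i, hi⟩ := hneg
    exact not_lt.2 (ha0 i) hi
  have hzU : rdist z a ≤ ε * glbDist rdist z (faceBoundaryOf R w sτ) := hza ▸ hz
  have hzB : 0 < glbDist rdist z (faceBoundaryOf R w sτ) :=
    pos_of_mul_pos_right (hd.trans_le hzU) hε0.le
  obtain ⟨s, hs0, hs1, hy0, u, hu, hyu⟩ := exists_lineMap_nonneg_eq_zero ha0 hneg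
  set y := AffineMap.lineMap a z s
  have hcoord : ∀ i, b.coord i y = AffineMap.lineMap (b.coord i a) (b.coord i z) s :=
    fun i => AffineMap.apply_lineMap _ _ _ _
  have huτ : u ∈ sτ := by_contra fun h => not_lt.2 (hout u h) hu
  have hyF : y ∈ faceOf R w {u}ᶜ := by
    refine (mem_faceOf_iff hw).2 ⟨fun i => hcoord i ▸ hy0 i, fun i hi => ?_⟩
    rw [notMem_compl_iff, mem_singleton_iff] at hi
    rw [hi, hcoord, hyu]
  have hyU := lineMap_mem_UbarSet hsq (isProximinal_faceBoundaryOf hsq hw sτ) hε0.le hε1.le hz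
    haτ hza hzB hs0 hs1.le
  have hyB : y ∈ faceBoundaryOf R w sτ := by_contra fun hyB =>
    (eq_empty_iff_forall_notMem.1 (hε _ (not_faceOf_subset_faceOf_compl hw huτ))) y
      ⟨⟨hyU, hyB⟩, hyF⟩
  have hzy := (isGLB_glbDist_of_pos hzB).1 ⟨y, hyB, rfl⟩
  rw [rdist_right_lineMap hsq hs1.le] at hzy
  nlinarith

end Tube

section SliceThroughFace

variable {R : Type*} [Field R] [LinearOrder R] [IsStrictOrderedRing R] {n : ℕ}
  {w : Fin (n + 1) → (Fin n → R)} {sτ : Set (Fin (n + 1))} {p : Fin n → R}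

theorem coord_add_smul_sub_of_mem_affineSpan_faceOf (hw : AffineIndependent R w)
    {l l' : Fin n → R} (hl : l ∈ affineSpan R (faceOf R w sτ))
    (hl' : l' ∈ affineSpan R (faceOf R w sτ)) (t : R) {j : Fin (n + 1)} (hj : j ∉ sτ) :
    (simplexBasis w hw).coord j (l + t • (p - l')) = t * (simplexBasis w hw).coord j p := by
  have hL : ∀ x ∈ affineSpan R (faceOf R w sτ), (simplexBasis w hw).coord j x = 0 :=
    fun x hx => (simplexBasis w hw).coord_eq_zero_of_mem_affineSpan_image
      (by rwa [faceOf, affineSpan_convexHull] at hx) hj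
  rw [AffineMap.apply_add_smul_sub, hL l hl, hL l' hl']
  ring

theorem coord_nonneg_of_mem_halfspacePlus (hw : AffineIndependent R w)
    (hp : p ∈ simplexHull R w) {z : Fin n → R}
    (hz : z ∈ halfspacePlus R (affineSpan R (faceOf R w sτ) : Set (Fin n → R)) p) :
    ∀ j ∉ sτ, 0 ≤ (simplexBasis w hw).coord j z := by
  obtain ⟨l, hl, l', hl', t, ht, rfl⟩ := hz
  intro j hj
  rw [coord_add_smul_sub_of_mem_affineSpan_faceOf hw hl hl' t hj]
  exact mul_nonneg ht ((mem_simplexHull_iff hw).1 hp j)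

theorem simplexHull_inter_affineSpan_subset_halfspacePlus (hw : AffineIndependent R w)
    (hsτ : sτ.Nonempty) (hp : p ∈ simplexHull R w \ faceOf R w sτ) :
    simplexHull R w ∩ (affineSpan R (faceOf R w sτ ∪ {p}) : Set (Fin n → R)) ⊆
      halfspacePlus R (affineSpan R (faceOf R w sτ) : Set (Fin n → R)) p := by
  obtain ⟨hpσ, hpτ⟩ := hp
  have hp0 := (mem_simplexHull_iff hw).1 hpσ
  obtain ⟨j, hj, hpj⟩ : ∃ j ∉ sτ, 0 < (simplexBasis w hw).coord j p := by
    by_contra! h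
    exact hpτ ((mem_faceOf_iff hw).2 ⟨hp0, fun j hj => le_antisymm (h j hj) (hp0 j)⟩)
  obtain ⟨i0, hi0⟩ := hsτ
  have hq : w i0 ∈ affineSpan R (faceOf R w sτ) :=
    subset_affineSpan R _ (subset_convexHull R _ ⟨i0, hi0, rfl⟩)
  rintro z ⟨hzσ, hz⟩
  rw [union_singleton, ← affineSpan_insert_affineSpan, SetLike.mem_coe,
    AffineSubspace.mem_affineSpan_insert_iff hq] at hz
  obtain ⟨t, l, hl, rfl⟩ := hz
  rw [vsub_eq_sub, vadd_eq_add, add_comm (t • _)] at hzσ ⊢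
  have hzj := (mem_simplexHull_iff hw).1 hzσ j
  rw [coord_add_smul_sub_of_mem_affineSpan_faceOf hw hl hq t hj] at hzj
  exact ⟨l, hl, w i0, hq, t, nonneg_of_mul_nonneg_left hzj hpj, rfl⟩

end SliceThroughFace

/-- For an `n`-simplex `σ ⊆ R^n`, a face `τ` with affine span `L`, and `ε` small enough
that `Ū_{τ,ε} ∖ ∂τ` meets only the faces of `σ` containing `τ`:
`σ ∩ [L,p] ∩ Ū_{τ,ε} = [L,p]⁺ ∩ Ū_{τ,ε}` for each `p ∈ σ ∖ τ`. -/
theorem section_of_tube_in_simplex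
    {R : Type*} [Field R] [LinearOrder R] [IsStrictOrderedRing R] (hR : IsRealClosedField R)
    {n : ℕ} (w : Fin (n + 1) → (Fin n → R)) (hw : AffineIndependent R w)
    (sτ : Set (Fin (n + 1))) (hsτ : sτ.Nonempty)
    (ε : R) (hε0 : 0 < ε) (hε1 : ε < 1)
    (hε : ∀ s : Set (Fin (n + 1)), ¬ faceOf R w sτ ⊆ faceOf R w s →
      (UbarSet (faceOf R w sτ) (faceBoundaryOf R w sτ) ε \ faceBoundaryOf R w sτ) ∩
        faceOf R w s = ∅) :
    ∀ p ∈ simplexHull R w \ faceOf R w sτ,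
      simplexHull R w ∩
          (affineSpan R (faceOf R w sτ ∪ {p}) : Set (Fin n → R)) ∩
          UbarSet (faceOf R w sτ) (faceBoundaryOf R w sτ) ε =
        halfspacePlus R (affineSpan R (faceOf R w sτ) : Set (Fin n → R)) p ∩
          UbarSet (faceOf R w sτ) (faceBoundaryOf R w sτ) ε := by
  have hsq : ∀ x : R, 0 ≤ x → IsSquare x := fun x hx =>
    let ⟨y, hy⟩ := hR.1 x hx
    ⟨y, hy.symm⟩
  intro p hp
  ext z
  refine ⟨fun ⟨hz, hzU⟩ => ⟨simplexHull_inter_affineSpan_subset_halfspacePlus hw hsτ hp hz, hzU⟩,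
    fun ⟨hz, hzU⟩ => ⟨⟨?_, halfspacePlus_subset_affineSpan_union _ p hz⟩, hzU⟩⟩
  exact mem_simplexHull_of_mem_UbarSet hsq hw hsτ hε0 hε1 hε hzU
    (coord_nonneg_of_mem_halfspacePlus hw hp.1 hz)
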